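/- Let 0 < p ≤ 1 and 0 < λ < 1. Then there exists a constant C_λ > 0 depending only on λ (and p) such that for all N, k ∈ ℕ: a_k(id : ℓ_p^N → ℓ_∞^N) ≤ 1 if k ≤ N^λ; a_k(id : ℓ_p^N → ℓ_∞^N) ≤ C_λ · k^{−1/2} if N^λ < k ≤ N; and a_k(id : ℓ_p^N → ℓ_∞^N) = 0 if k > N. -/

import Mathlib

open scoped ENNReal

/-- The `ℓ_p` (quasi-)norm on `ℝ^N`. -/
noncomputable def lpnorm (p : ℝ≥0∞) {N : ℕ} (x : Fin N → ℝ) : ℝ :=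
  if p = ∞ then ⨆ i, |x i| else (∑ i, |x i| ^ p.toReal) ^ (1 / p.toReal)

/-- The `k`-th approximation number of the identity map `id : ℓ_{p₁}^N → ℓ_{p₂}^N`. -/
noncomputable def approxNumId (p₁ p₂ : ℝ≥0∞) (N k : ℕ) : ℝ :=
  sInf {r : ℝ | ∃ A : (Fin N → ℝ) →ₗ[ℝ] (Fin N → ℝ),
    Module.rank ℝ (LinearMap.range A) < k ∧
    r = sSup {c : ℝ | ∃ x : Fin N → ℝ, lpnorm p₁ x ≤ 1 ∧ c = lpnorm p₂ (x - A x)}}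

/-!
For a prime `q > s`, give the coordinates `j < N ≤ q ^ s` distinct digit vectors
`a_j : Fin s → Fin q` and put `f_j = ∑ₘ a_j(m) X^(m+1)`. The real Gram matrix `M` of the vectors
`x ↦ e(f_j(x) / q²) / q`, `x < q²`, has rank at most `2q²`, unit diagonal, and off-diagonal
entries of size at most `s / q`: summing over residue classes mod `q` turns
`∑_{x < q²} e(f(x) / q²)` into `q` times a sum over the roots of `f'` mod `q`, of which there are
fewer than `s` when `f = f_i - f_j ≠ 0`. Since the `ℓ_p`-ball, `p ≤ 1`, lies in the `ℓ_1`-ball,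
`x ↦ M x` approximates the identity to within `s / q ≍ k^(-1/2)` in `ℓ_∞` as soon as `2q² < k`.
With `s ≥ 3 / λ` and `q ≥ 8`, the condition `N ^ λ < k ≤ 8q² ≤ q³` forces `N ≤ q ^ s`.
-/

open Finset Polynomial Real

section ExponentialSum

variable {K : Type*} [Field K] {q : ℕ} {ζ : K}

lemma sum_range_pow_eq_zero {η : K} (hη : η ^ q = 1) (hη₁ : η ≠ 1) :
    ∑ v ∈ range q, η ^ v = 0 :=
  (mul_eq_zero.mp ((geom_sum_mul η q).trans (by rw [hη, sub_self]))).resolve_right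
    (sub_ne_zero.mpr hη₁)

lemma IsPrimitiveRoot.zpow_add_of_dvd (hζ : IsPrimitiveRoot ζ q) (a : ℤ) {b : ℤ}
    (hb : (q : ℤ) ∣ b) : ζ ^ (a + b) = ζ ^ a := by
  rcases eq_or_ne q 0 with rfl | hq
  · rw [Int.natCast_zero, zero_dvd_iff] at hb
    rw [hb, add_zero]
  rw [zpow_add₀ (hζ.ne_zero hq), (hζ.zpow_eq_one_iff_dvd b).mpr hb, mul_one]

/-- Modulo `q²`, `f (u + q v) ≡ f u + q v f' u`, so the sum over the residue class of `u`
is a geometric sum in `ζ ^ (q f' u)`. -/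
lemma sum_zpow_eval_add_mul (hq : 0 < q) (hζ : IsPrimitiveRoot ζ (q ^ 2)) (f : ℤ[X]) (u : ℤ) :
    ∑ v : Fin q, ζ ^ f.eval (u + q * v) =
      if (q : ℤ) ∣ f.derivative.eval u then (q : K) * ζ ^ f.eval u else 0 := by
  have hexp : ∀ v : ℕ,
      ζ ^ f.eval (u + q * v) = ζ ^ f.eval u * (ζ ^ (q * f.derivative.eval u)) ^ v := fun v => by
    obtain ⟨c, hc⟩ := f.binomExpansion u (q * v)
    rw [hc, hζ.zpow_add_of_dvd _ ⟨c * v ^ 2, by push_cast; ring⟩,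
      zpow_add₀ (hζ.ne_zero (by positivity)), ← zpow_natCast, ← zpow_mul]
    congr 2
    ring
  simp_rw [Fin.sum_univ_eq_sum_range (fun v => ζ ^ f.eval (u + q * v)), hexp, ← mul_sum]
  split_ifs with hdvd
  · obtain ⟨t, ht⟩ := hdvd
    have : ζ ^ ((q : ℤ) * f.derivative.eval u) = 1 :=
      (hζ.zpow_eq_one_iff_dvd _).mpr ⟨t, by rw [ht]; push_cast; ring⟩
    simp [this, mul_comm]
  · rw [sum_range_pow_eq_zero, mul_zero]
    · rw [← zpow_natCast, ← zpow_mul, hζ.zpow_eq_one_iff_dvd]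
      exact ⟨f.derivative.eval u, by push_cast; ring⟩
    · rw [Ne, hζ.zpow_eq_one_iff_dvd]
      rintro ⟨t, ht⟩
      refine hdvd ⟨t, mul_left_cancel₀ (show (q : ℤ) ≠ 0 by positivity) ?_⟩
      push_cast at ht
      linear_combination ht

end ExponentialSum

lemma card_filter_dvd_eval_le {q : ℕ} [Fact q.Prime] (g : ℤ[X])
    (hg : g.map (Int.castRingHom (ZMod q)) ≠ 0) :
    #{u : Fin q | (q : ℤ) ∣ g.eval (u : ℤ)} ≤ (g.map (Int.castRingHom (ZMod q))).natDegree := by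
  classical
  refine (card_le_card_of_injOn (fun u : Fin q => ((u : ℤ) : ZMod q)) (fun u hu => ?_) ?_).trans
    ((Multiset.toFinset_card_le _).trans (card_roots' _))
  · rw [coe_filter, Set.mem_ofPred_eq, ← ZMod.intCast_zmod_eq_zero_iff_dvd,
      ← eq_intCast (Int.castRingHom _), ← eval₂_hom, ← eval_map] at hu
    simpa [mem_roots hg] using hu
  · intro u _ v _ huv
    rw [ZMod.intCast_eq_intCast_iff', Int.emod_eq_of_lt, Int.emod_eq_of_lt] at huv <;> omega

lemma norm_sum_zpow_eval_le {q : ℕ} [hq : Fact q.Prime] {ζ : ℂ} (hζ : IsPrimitiveRoot ζ (q ^ 2))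
    (f : ℤ[X]) (hf : f.derivative.map (Int.castRingHom (ZMod q)) ≠ 0) :
    ‖∑ u : Fin q, ∑ v : Fin q, ζ ^ f.eval ((u : ℤ) + q * v)‖ ≤
      q * (f.derivative.map (Int.castRingHom (ZMod q))).natDegree := by
  have hnorm : ∀ n : ℤ, ‖ζ ^ n‖ = 1 := fun n => by
    rw [norm_zpow, hζ.norm'_eq_one (by simp [hq.out.ne_zero]), one_zpow]
  simp_rw [sum_zpow_eval_add_mul hq.out.pos hζ]
  calc ‖∑ u : Fin q,
          if (q : ℤ) ∣ f.derivative.eval (u : ℤ) then (q : ℂ) * ζ ^ f.eval (u : ℤ) else 0‖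
      ≤ ∑ u : Fin q, if (q : ℤ) ∣ f.derivative.eval (u : ℤ) then (q : ℝ) else 0 := by
        refine (norm_sum_le _ _).trans (sum_le_sum fun u _ => ?_)
        split_ifs <;> simp [hnorm]
    _ = q * #{u : Fin q | (q : ℤ) ∣ f.derivative.eval (u : ℤ)} := by
        rw [sum_ite, sum_const_zero, add_zero, sum_const, nsmul_eq_mul, mul_comm]
    _ ≤ q * (f.derivative.map (Int.castRingHom (ZMod q))).natDegree := by
        gcongr
        exact card_filter_dvd_eval_le _ hf

section WeylPoly

variable {s : ℕ}

noncomputable def weylPoly (a : Fin s → ℤ) : ℤ[X] := ∑ m, C (a m) * X ^ (m.1 + 1)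

lemma weylPoly_sub (a b : Fin s → ℤ) : weylPoly a - weylPoly b = weylPoly (a - b) := by
  simp only [weylPoly, ← sum_sub_distrib, Pi.sub_apply, C_sub, sub_mul]

lemma natDegree_weylPoly_le (a : Fin s → ℤ) : (weylPoly a).natDegree ≤ s :=
  natDegree_sum_le_of_forall_le _ _ fun m _ => (natDegree_C_mul_X_pow_le _ _).trans m.2

lemma coeff_weylPoly_succ (a : Fin s → ℤ) (m : Fin s) : (weylPoly a).coeff (m + 1) = a m := by
  simp [weylPoly, Fin.val_inj]

lemma map_derivative_weylPoly_ne_zero {q : ℕ} [Fact q.Prime] (hsq : s < q) {a : Fin s → ℤ}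
    {m : Fin s} (hm : ¬ (q : ℤ) ∣ a m) :
    (weylPoly a).derivative.map (Int.castRingHom (ZMod q)) ≠ 0 := by
  intro h
  have hcoeff := congrArg (coeff · m) h
  simp only [coeff_map, coeff_derivative, coeff_weylPoly_succ, coeff_zero, eq_intCast,
    Int.cast_mul, mul_eq_zero, ZMod.intCast_zmod_eq_zero_iff_dvd] at hcoeff
  refine hcoeff.elim hm fun hdvd => ?_
  have := Int.le_of_dvd (by omega) hdvd
  omega

lemma norm_sum_zpow_eval_weylPoly_le {q : ℕ} [Fact q.Prime] (hsq : s < q) {ζ : ℂ}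
    (hζ : IsPrimitiveRoot ζ (q ^ 2)) {a b : Fin s → Fin q} (hab : a ≠ b) :
    ‖∑ u : Fin q, ∑ v : Fin q,
        ζ ^ (weylPoly fun m => (a m - b m : ℤ)).eval ((u : ℤ) + q * v)‖ ≤ q * s := by
  obtain ⟨m, hm⟩ := Function.ne_iff.mp hab
  have hdvd : ¬ (q : ℤ) ∣ (a m - b m : ℤ) := fun hdvd => by
    have := Int.eq_zero_of_abs_lt_dvd hdvd (by rw [abs_lt]; omega)
    omega
  refine (norm_sum_zpow_eval_le hζ _ (map_derivative_weylPoly_ne_zero hsq hdvd)).trans ?_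
  gcongr
  exact (natDegree_map_le.trans (natDegree_derivative_le _)).trans
    ((Nat.sub_le _ _).trans (natDegree_weylPoly_le _))

end WeylPoly

open Matrix

section CosGram

variable {ι J : Type*} [Fintype ι]

noncomputable def cosGram (θ : ι → J → ℝ) : Matrix J J ℝ :=
  of fun i j => (∑ x, cos (θ x i - θ x j)) / Fintype.card ι

lemma cosGram_apply_self [Nonempty ι] (θ : ι → J → ℝ) (j : J) : cosGram θ j j = 1 := by
  simp [cosGram]

lemma cosGram_eq_mul (θ : ι → J → ℝ) :
    cosGram θ = ((Fintype.card ι : ℝ)⁻¹ • fromCols (of fun i x => cos (θ x i))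
      (of fun i x => sin (θ x i))) *
      fromRows (of fun x j => cos (θ x j)) (of fun x j => sin (θ x j)) := by
  ext i j
  simp [cosGram, mul_apply, cos_sub, sum_add_distrib, mul_add, mul_sum, mul_assoc, div_eq_inv_mul]

lemma rank_cosGram_le [Fintype J] (θ : ι → J → ℝ) : (cosGram θ).rank ≤ 2 * Fintype.card ι := by
  rw [cosGram_eq_mul]
  refine (rank_mul_le_right _ _).trans ((rank_le_card_height _).trans ?_)
  rw [Fintype.card_sum, two_mul]

end CosGram

lemma re_exp_two_pi_mul_I_div_zpow (m : ℕ) (n : ℤ) :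
    (Complex.exp (2 * π * Complex.I / m) ^ n).re = cos (2 * π * n / m) := by
  rw [← Complex.exp_int_mul, ← Complex.exp_ofReal_mul_I_re]
  congr 2
  push_cast
  ring

lemma exists_rank_le_abs_one_sub_le {q s N : ℕ} [hq : Fact q.Prime] (hsq : s < q)
    (hN : N ≤ q ^ s) :
    ∃ M : Matrix (Fin N) (Fin N) ℝ, M.rank ≤ 2 * q ^ 2 ∧ ∀ i j, |(1 - M) i j| ≤ s / q := by
  obtain ⟨e⟩ : Nonempty (Fin N ↪ (Fin s → Fin q)) :=
    Function.Embedding.nonempty_of_card_le (by simpa using hN)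
  let θ : Fin q × Fin q → Fin N → ℝ := fun x j =>
    2 * π * (weylPoly fun m => (e j m : ℤ)).eval ((x.1 : ℤ) + q * x.2) / (q ^ 2 : ℕ)
  have : Nonempty (Fin q) := ⟨⟨0, hq.out.pos⟩⟩
  refine ⟨cosGram θ, by simpa [sq] using rank_cosGram_le θ, fun i j => ?_⟩
  rcases eq_or_ne i j with rfl | hij
  · simp only [Matrix.sub_apply, one_apply_eq, cosGram_apply_self, sub_self, abs_zero]
    positivity
  rw [Matrix.sub_apply, one_apply_ne hij, zero_sub, abs_neg]
  have hζ := Complex.isPrimitiveRoot_exp (q ^ 2) (by simp [hq.out.ne_zero])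
  have hsum : ∑ x, cos (θ x i - θ x j) =
      (∑ u : Fin q, ∑ v : Fin q, Complex.exp (2 * π * Complex.I / (q ^ 2 : ℕ)) ^
        (weylPoly (fun m => (e i m : ℤ)) - weylPoly fun m => (e j m : ℤ)).eval
          ((u : ℤ) + q * v)).re := by
    simp only [Complex.re_sum, re_exp_two_pi_mul_I_div_zpow, eval_sub, Int.cast_sub,
      Fintype.sum_prod_type, θ, ← sub_div, mul_sub]
  calc |cosGram θ i j| = |∑ x, cos (θ x i - θ x j)| / q ^ 2 := by
        simp [cosGram, abs_div, sq]
    _ ≤ q * s / q ^ 2 := by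
        rw [hsum, weylPoly_sub]
        gcongr
        exact (Complex.abs_re_le_norm _).trans
          (norm_sum_zpow_eval_weylPoly_le hsq hζ (e.injective.ne hij))
    _ = s / q := by field_simp

section Approximation

lemma lpnorm_nonneg (p : ℝ≥0∞) {N : ℕ} (x : Fin N → ℝ) : 0 ≤ lpnorm p x := by
  unfold lpnorm
  split_ifs
  · exact Real.iSup_nonneg fun i => abs_nonneg _
  · exact rpow_nonneg (sum_nonneg fun i _ => rpow_nonneg (abs_nonneg _) _) _

lemma lpnorm_top_le {N : ℕ} {x : Fin N → ℝ} {B : ℝ} (hB : 0 ≤ B) (h : ∀ i, |x i| ≤ B) :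
    lpnorm ∞ x ≤ B := by
  rw [lpnorm, if_pos rfl]
  exact Real.iSup_le h hB

lemma sum_abs_le_one_of_lpnorm_le_one {p : ℝ≥0∞} (h₀ : 0 < p) (h₁ : p ≤ 1) {N : ℕ}
    {x : Fin N → ℝ} (hx : lpnorm p x ≤ 1) : ∑ i, |x i| ≤ 1 := by
  have hp : p ≠ ∞ := ne_top_of_le_ne_top ENNReal.one_ne_top h₁
  have hρ₀ : 0 < p.toReal := ENNReal.toReal_pos h₀.ne' hp
  have hρ₁ : p.toReal ≤ 1 := ENNReal.toReal_le_of_le_ofReal zero_le_one (by simpa using h₁)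
  rw [lpnorm, if_neg hp, one_div, rpow_inv_le_iff_of_pos (sum_nonneg fun i _ => by positivity)
    zero_le_one hρ₀, one_rpow] at hx
  have habs : ∀ i, |x i| ≤ 1 := fun i => by
    have := (single_le_sum (fun j _ => by positivity) (mem_univ i)).trans hx
    exact le_of_not_gt fun h => (one_lt_rpow h hρ₀).not_ge this
  exact (sum_le_sum fun i _ => self_le_rpow_of_le_one (abs_nonneg _) (habs i) hρ₁).trans hx

lemma abs_mulVec_apply_le {m n : Type*} [Fintype n] {A : Matrix m n ℝ} {i : m} {ε : ℝ}
    (h : ∀ j, |A i j| ≤ ε) (x : n → ℝ) : |(A *ᵥ x) i| ≤ ε * ∑ j, |x j| := by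
  rw [mulVec, dotProduct, mul_sum]
  refine (abs_sum_le_sum_abs _ _).trans (sum_le_sum fun j _ => ?_)
  rw [abs_mul]
  exact mul_le_mul_of_nonneg_right (h j) (abs_nonneg _)

lemma approxNumId_nonneg (p₁ p₂ : ℝ≥0∞) (N k : ℕ) : 0 ≤ approxNumId p₁ p₂ N k :=
  Real.sInf_nonneg fun _ ⟨_, _, hr⟩ =>
    hr ▸ Real.sSup_nonneg fun _ ⟨_, _, hc⟩ => hc ▸ lpnorm_nonneg _ _

lemma approxNumId_le {p₁ p₂ : ℝ≥0∞} {N k : ℕ} {ε : ℝ} (hε : 0 ≤ ε)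
    (A : (Fin N → ℝ) →ₗ[ℝ] (Fin N → ℝ)) (hA : Module.rank ℝ (LinearMap.range A) < k)
    (h : ∀ x, lpnorm p₁ x ≤ 1 → lpnorm p₂ (x - A x) ≤ ε) : approxNumId p₁ p₂ N k ≤ ε := by
  unfold approxNumId
  refine csInf_le_of_le (b := sSup {c | ∃ x, lpnorm p₁ x ≤ 1 ∧ c = lpnorm p₂ (x - A x)})
    ⟨0, ?_⟩ ⟨A, hA, rfl⟩ (Real.sSup_le ?_ hε)
  · rintro _ ⟨B, -, rfl⟩
    exact Real.sSup_nonneg fun _ ⟨_, _, hc⟩ => hc ▸ lpnorm_nonneg _ _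
  · rintro _ ⟨x, hx, rfl⟩
    exact h x hx

variable {p : ℝ≥0∞} (h₀ : 0 < p) (h₁ : p ≤ 1) {N k : ℕ}
include h₀ h₁

lemma approxNumId_le_of_abs_one_sub_le (M : Matrix (Fin N) (Fin N) ℝ) (hM : M.rank < k)
    {ε : ℝ} (hε : 0 ≤ ε) (h : ∀ i j, |(1 - M) i j| ≤ ε) : approxNumId p ∞ N k ≤ ε := by
  refine approxNumId_le hε M.mulVecLin ?_ fun x hx => lpnorm_top_le hε fun i => ?_
  · rw [← Module.finrank_eq_rank]
    exact_mod_cast hM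
  · rw [mulVecLin_apply, show x - M *ᵥ x = (1 - M) *ᵥ x by rw [sub_mulVec, one_mulVec]]
    exact (abs_mulVec_apply_le (h i) x).trans
      (mul_le_of_le_one_right hε (sum_abs_le_one_of_lpnorm_le_one h₀ h₁ hx))

lemma approxNumId_le_one (hk : 1 ≤ k) : approxNumId p ∞ N k ≤ 1 :=
  approxNumId_le_of_abs_one_sub_le h₀ h₁ 0 (by rwa [rank_zero]) zero_le_one fun i j => by
    rw [sub_zero, one_apply]
    split_ifs <;> simp

lemma approxNumId_eq_zero_of_lt (hk : N < k) : approxNumId p ∞ N k = 0 :=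
  (approxNumId_le_of_abs_one_sub_le h₀ h₁ 1 (by simpa using hk) le_rfl (by simp)).antisymm
    (approxNumId_nonneg _ _ _ _)

lemma approxNumId_le_div {q s : ℕ} (hq : q.Prime) (hsq : s < q) (hN : N ≤ q ^ s)
    (hk : 2 * q ^ 2 < k) : approxNumId p ∞ N k ≤ s / q := by
  have := Fact.mk hq
  obtain ⟨M, hrank, hM⟩ := exists_rank_le_abs_one_sub_le hsq hN
  exact approxNumId_le_of_abs_one_sub_le h₀ h₁ M (hrank.trans_lt hk) (by positivity) hM

end Approximation

lemma exists_prime_gt_sq_lt_le {n k : ℕ} (hn : 0 < n) (hk : 8 * n ^ 2 < k) :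
    ∃ q, q.Prime ∧ n < q ∧ 2 * q ^ 2 < k ∧ k ≤ 8 * q ^ 2 := by
  set m := Nat.sqrt ((k - 1) / 8)
  have hnm : n ≤ m := Nat.le_sqrt'.mpr (by omega)
  obtain ⟨q, hq, hmq, hqm⟩ := Nat.exists_prime_lt_and_le_two_mul m (by omega)
  have hm_le : m ^ 2 ≤ (k - 1) / 8 := Nat.sqrt_le' _
  have hm_lt : (k - 1) / 8 < (m + 1) ^ 2 := Nat.lt_succ_sqrt' _
  have h1 : q ^ 2 ≤ (2 * m) ^ 2 := Nat.pow_le_pow_left hqm 2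
  have h2 : (m + 1) ^ 2 ≤ q ^ 2 := Nat.pow_le_pow_left hmq 2
  refine ⟨q, hq, by omega, by rw [mul_pow] at h1; omega, by omega⟩

lemma le_pow_of_rpow_lt_pow {N q r s : ℕ} {lam : ℝ} (hlam : 0 < lam) (hq : 1 ≤ q)
    (hs : r / lam ≤ s) (h : (N : ℝ) ^ lam < (q : ℝ) ^ r) : N ≤ q ^ s := by
  have hq' : (1 : ℝ) ≤ q := by exact_mod_cast hq
  rw [← lt_rpow_inv_iff_of_pos (by positivity) (by positivity) hlam, ← rpow_natCast,
    ← rpow_mul (by positivity)] at h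
  have := h.le.trans (rpow_le_rpow_of_exponent_le hq' (by simpa [div_eq_mul_inv] using hs))
  rw [rpow_natCast] at this
  exact_mod_cast this

lemma le_mul_rpow_neg_half {a C k : ℝ} (hk : 0 < k) (h : a * √k ≤ C) :
    a ≤ C * k ^ (-(1 / 2) : ℝ) := by
  rwa [rpow_neg hk.le, ← sqrt_eq_rpow, ← div_eq_mul_inv, le_div_iff₀ (sqrt_pos.mpr hk)]

theorem approx_number_id_finite_lp_infty_upper_general
    (p : ℝ≥0∞) (h₀ : 0 < p) (h₁ : p ≤ 1) (lam : ℝ) (hl₀ : 0 < lam) :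
    ∃ C : ℝ, 0 < C ∧ ∀ N k : ℕ, 1 ≤ k →
      ((k : ℝ) ≤ (N : ℝ) ^ lam → approxNumId p ∞ N k ≤ 1) ∧
      ((N : ℝ) ^ lam < (k : ℝ) → k ≤ N →
        approxNumId p ∞ N k ≤ C * (k : ℝ) ^ (-(1/2) : ℝ)) ∧
      (N < k → approxNumId p ∞ N k = 0) := by
  set s := ⌈3 / lam⌉₊
  -- Below `8 (s + 7)²` the trivial bound `1` suffices; above it Bertrand's postulate provides a
  -- prime `q > s + 7` with `2q² < k ≤ 8q²`.
  refine ⟨8 * (s + 7) ^ 2, by positivity, fun N k hk => ⟨fun _ => approxNumId_le_one h₀ h₁ hk,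
    fun hNk _ => ?_, approxNumId_eq_zero_of_lt h₀ h₁⟩⟩
  have hk₀ : (1 : ℝ) ≤ k := by exact_mod_cast hk
  rcases le_or_gt k (8 * (s + 7) ^ 2) with hsmall | hlarge
  · refine (approxNumId_le_one h₀ h₁ hk).trans (le_mul_rpow_neg_half (by positivity) ?_)
    rw [one_mul]
    exact (sqrt_le_self_iff.mpr (Or.inr hk₀)).trans (by exact_mod_cast hsmall)
  obtain ⟨q, hq, hsq, hqk, hkq⟩ := exists_prime_gt_sq_lt_le (by omega) hlarge
  have hkq' : (k : ℝ) ≤ 8 * q ^ 2 := by exact_mod_cast hkq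
  have hq8 : (8 : ℝ) ≤ q := by exact_mod_cast (show 8 ≤ q by omega)
  have hN : N ≤ q ^ s := le_pow_of_rpow_lt_pow (r := 3) hl₀ hq.one_le (Nat.le_ceil _)
    (hNk.trans_le (hkq'.trans (by nlinarith)))
  refine (approxNumId_le_div h₀ h₁ hq (by omega) hN hqk).trans
    (le_mul_rpow_neg_half (by positivity) ?_)
  have hsqrt : √k ≤ 3 * q := sqrt_le_iff.mpr ⟨by positivity, by nlinarith⟩
  calc (s : ℝ) / q * √k ≤ s / q * (3 * q) := by gcongr
    _ = 3 * s := by field_simp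
    _ ≤ _ := by nlinarith

/-- Let `0 < p ≤ 1` and `0 < λ < 1`. Then there is a constant `C_λ > 0` depending
only on `λ` (and `p`) such that `a_k(id : ℓ_p^N → ℓ_∞^N) ≤ 1` if `k ≤ N^λ`,
`a_k ≤ C_λ k^{-1/2}` if `N^λ < k ≤ N`, and `a_k = 0` if `k > N`. -/
theorem approx_number_id_finite_lp_infty_upper
    (p : ℝ≥0∞) (h₀ : 0 < p) (h₁ : p ≤ 1) (lam : ℝ) (hl₀ : 0 < lam) (hl₁ : lam < 1) :
    ∃ C : ℝ, 0 < C ∧ ∀ N k : ℕ, 1 ≤ k →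
      ((k : ℝ) ≤ (N : ℝ) ^ lam → approxNumId p ∞ N k ≤ 1) ∧
      ((N : ℝ) ^ lam < (k : ℝ) → k ≤ N →
        approxNumId p ∞ N k ≤ C * (k : ℝ) ^ (-(1/2) : ℝ)) ∧
      (N < k → approxNumId p ∞ N k = 0) :=
  approx_number_id_finite_lp_infty_upper_general p h₀ h₁ lam hl₀
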